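/- arXiv:2402.17232 — 2 statements merged into one kernel-verified Lean document; each statement's English description precedes it below -/
import Mathlib

section
/- Let ε > 0 and define u(x) = exp((x² − 1)/(2ε)) · (Erf(x/√(2ε)) + 3·Erf(1/√(2ε))) / (2·Erf(1/√(2ε))) for x ∈ [−1,1], where Erf(z) = (2/√π)∫₀^z exp(−t²) dt. Then u satisfies ε·u''(x) − x·u'(x) − u(x) = 0 for all x ∈ (−1,1), with u(−1) = 1 and u(1) = 2. -/
/-!
The operator is a total derivative: `ε u'' - x u' - u = (ε u' - x u)'`. Writing
`u = exp ((x² - 1) / 2ε) G / c` with `G x = Erf (x / √(2ε)) + 3 Erf (1 / √(2ε))`, the Gaussian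
`exp (-x² / 2ε)` in `G'` cancels against the prefactor, so `ε u' - x u = ε exp ((x² - 1) / 2ε) G' / c`
is constant and the equation follows. The boundary values come from `exp 0 = 1` and the oddness
of `Erf`.
-/

open Real

lemma intervalIntegral.integral_zero_neg_of_even {E : Type*} [NormedAddCommGroup E]
    [NormedSpace ℝ E] {f : ℝ → E} (hf : ∀ t, f (-t) = f t) (z : ℝ) :
    ∫ t in (0 : ℝ)..-z, f t = -∫ t in (0 : ℝ)..z, f t := by
  rw [intervalIntegral.integral_symm, ← neg_zero, ← intervalIntegral.integral_comp_neg,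
    neg_zero]
  simp only [hf]

lemma hasDerivAt_integral_exp_neg_sq (z : ℝ) :
    HasDerivAt (fun z => ∫ t in (0 : ℝ)..z, exp (-t ^ 2)) (exp (-z ^ 2)) z :=
  ((by fun_prop : Continuous fun t : ℝ => exp (-t ^ 2)).integral_hasStrictDerivAt 0 z).hasDerivAt

lemma integral_exp_neg_sq_pos {z : ℝ} (hz : 0 < z) : 0 < ∫ t in (0 : ℝ)..z, exp (-t ^ 2) :=
  intervalIntegral.intervalIntegral_pos_of_pos
    ((by fun_prop : Continuous fun t : ℝ => exp (-t ^ 2)).intervalIntegrable 0 z)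
    (fun _ => exp_pos _) hz

lemma hasDerivAt_exp_sq_mul {ε a κ : ℝ} {G : ℝ → ℝ}
    (hG : ∀ x, HasDerivAt G (κ * exp (-x ^ 2 / (2 * ε))) x) (x : ℝ) :
    HasDerivAt (fun x => exp ((x ^ 2 - a) / (2 * ε)) * G x)
      (x / ε * (exp ((x ^ 2 - a) / (2 * ε)) * G x) + κ * exp (-a / (2 * ε))) x := by
  have hexp : HasDerivAt (fun x => exp ((x ^ 2 - a) / (2 * ε)))
      (exp ((x ^ 2 - a) / (2 * ε)) * (2 * x / (2 * ε))) x := by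
    simpa using (((hasDerivAt_pow 2 x).sub_const a).div_const (2 * ε)).exp
  refine (hexp.mul (hG x)).congr_deriv ?_
  have hcancel : exp ((x ^ 2 - a) / (2 * ε)) * exp (-x ^ 2 / (2 * ε)) = exp (-a / (2 * ε)) := by
    rw [← exp_add]; congr 1; ring
  linear_combination κ * hcancel

lemma ode_of_hasDerivAt_mul_add_const {ε C : ℝ} (hε : ε ≠ 0) {u : ℝ → ℝ}
    (hu : ∀ x, HasDerivAt u (x / ε * u x + C) x) (x : ℝ) :
    ε * deriv (deriv u) x - x * deriv u x - u x = 0 := by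
  have hu' : deriv u = fun x => x / ε * u x + C := funext fun x => (hu x).deriv
  have hu'' : HasDerivAt (deriv u) (1 / ε * u x + x / ε * (x / ε * u x + C)) x := by
    rw [hu']
    exact (((hasDerivAt_id x).div_const ε).mul (hu x)).add_const C
  rw [hu''.deriv, hu']
  field_simp
  ring

theorem stmt_4 (ε : ℝ) (hε : 0 < ε) (Erf u : ℝ → ℝ)
    (hErf : ∀ z : ℝ, Erf z = (2 / Real.sqrt Real.pi) * ∫ t in (0:ℝ)..z, Real.exp (-t^2))
    (hu : ∀ x : ℝ, u x = Real.exp ((x^2 - 1)/(2*ε)) *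
      (Erf (x / Real.sqrt (2*ε)) + 3 * Erf (1 / Real.sqrt (2*ε))) /
        (2 * Erf (1 / Real.sqrt (2*ε)))) :
    (∀ x ∈ Set.Ioo (-1:ℝ) 1, ε * deriv (deriv u) x - x * deriv u x - u x = 0) ∧
      u (-1) = 1 ∧ u 1 = 2 := by
  set s := √(2 * ε) with hs
  set A := Erf (1 / s) with hA_def
  have hA : 0 < A := by
    rw [hA_def, hErf]; exact mul_pos (by positivity) (integral_exp_neg_sq_pos (by positivity))
  have hErf_neg : Erf (-1 / s) = -A := by
    rw [hA_def, hErf, hErf, neg_div, intervalIntegral.integral_zero_neg_of_even (by simp), mul_neg]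
  have hG : ∀ x, HasDerivAt (fun x => Erf (x / s) + 3 * A)
      (2 / √π / s * exp (-x ^ 2 / (2 * ε))) x := by
    intro x
    have hErf' : HasDerivAt Erf (2 / √π * exp (-(x / s) ^ 2)) (x / s) := by
      rw [funext hErf]; exact (hasDerivAt_integral_exp_neg_sq _).const_mul _
    refine ((hErf'.comp x ((hasDerivAt_id x).div_const s)).add_const _).congr_deriv ?_
    rw [div_pow, hs, sq_sqrt (by positivity)]
    simp only [neg_div]
    ring
  have hu' : ∀ x, HasDerivAt u
      (x / ε * u x + 2 / √π / s * exp (-1 / (2 * ε)) / (2 * A)) x := by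
    intro x
    rw [funext hu]
    refine ((hasDerivAt_exp_sq_mul hG x).div_const (2 * A)).congr_deriv ?_
    ring
  refine ⟨fun x _ => ode_of_hasDerivAt_mul_add_const hε.ne' hu' x, ?_, ?_⟩
  · rw [hu, hErf_neg]; field_simp; norm_num
  · rw [hu, ← hA_def]; field_simp; norm_num
end

section
/- Let ε > 0 and u(x) = exp((x² − 1)/(2ε)) · (Erf(x/√(2ε)) + 3·Erf(1/√(2ε)))/(2·Erf(1/√(2ε))). For every fixed x with |x| < 1, u(x) → 0 as ε → 0⁺. -/
open Filter Set Real intervalIntegral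

noncomputable def Fg (z : ℝ) : ℝ := ∫ t in (0:ℝ)..z, Real.exp (-t^2)

lemma contFg : Continuous fun t : ℝ => Real.exp (-t^2) := by continuity

lemma Fg_nonneg {z : ℝ} (hz : 0 ≤ z) : 0 ≤ Fg z :=
  intervalIntegral.integral_nonneg hz (fun t _ => (Real.exp_pos _).le)

lemma Fg_mono {z w : ℝ} (hz : 0 ≤ z) (hzw : z ≤ w) : Fg z ≤ Fg w := by
  have h : Fg z + (∫ t in z..w, Real.exp (-t^2)) = Fg w :=
    intervalIntegral.integral_add_adjacent_intervals
      (contFg.intervalIntegrable _ _) (contFg.intervalIntegrable _ _)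
  have h2 : 0 ≤ ∫ t in z..w, Real.exp (-t^2) :=
    intervalIntegral.integral_nonneg hzw (fun t _ => (Real.exp_pos _).le)
  linarith

lemma Fg_neg (z : ℝ) : Fg (-z) = -Fg z := by
  unfold Fg
  have h := intervalIntegral.integral_comp_neg (a := (0:ℝ)) (b := -z)
    (fun t => Real.exp (-t^2))
  simp only [neg_sq, neg_neg, neg_zero] at h
  rw [h]
  exact intervalIntegral.integral_symm 0 z

lemma Fg_abs_le {z w : ℝ} (h : |z| ≤ w) : |Fg z| ≤ Fg w := by
  rcases le_or_gt 0 z with hz | hz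
  · rw [abs_of_nonneg (Fg_nonneg hz)]
    exact Fg_mono hz (le_trans (le_abs_self z) h)
  · have h1 : Fg z = -Fg (-z) := by rw [Fg_neg, neg_neg]
    have h2 : 0 ≤ Fg (-z) := Fg_nonneg (by linarith)
    rw [h1, abs_neg, abs_of_nonneg h2]
    exact Fg_mono (by linarith) (le_trans (neg_le_abs z) h)

lemma Fg_pos {w : ℝ} (hw : 0 < w) : 0 < Fg w :=
  intervalIntegral.intervalIntegral_pos_of_pos_on
    (contFg.intervalIntegrable _ _) (fun t _ => Real.exp_pos _) hw

theorem stmt_5 (Erf : ℝ → ℝ) (u : ℝ → ℝ → ℝ)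
    (hErf : ∀ z : ℝ, Erf z = (2 / Real.sqrt Real.pi) * ∫ t in (0:ℝ)..z, Real.exp (-t^2))
    (hu : ∀ ε x : ℝ, u ε x = Real.exp ((x^2 - 1)/(2*ε)) *
      (Erf (x / Real.sqrt (2*ε)) + 3 * Erf (1 / Real.sqrt (2*ε))) /
        (2 * Erf (1 / Real.sqrt (2*ε))))
    (x : ℝ) (hx : |x| < 1) :
    Filter.Tendsto (fun ε : ℝ => u ε x) (nhdsWithin 0 (Set.Ioi 0)) (nhds 0) := by
  have hc : 0 < 2 / Real.sqrt Real.pi := by positivity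
  have hx2 : x ^ 2 - 1 < 0 := by nlinarith [sq_abs x, abs_nonneg x]
  -- the dominating function
  set h : ℝ → ℝ := fun ε => 2 * Real.exp ((x ^ 2 - 1) / (2 * ε)) with hh
  have hbound : ∀ ε ∈ Set.Ioi (0:ℝ), |u ε x| ≤ h ε := by
    intro ε hε
    have hε' : (0:ℝ) < ε := hε
    have hs : 0 < Real.sqrt (2 * ε) := Real.sqrt_pos.mpr (by linarith)
    set s := Real.sqrt (2 * ε)
    have hB : 0 < Erf (1 / s) := by
      rw [hErf]
      exact mul_pos hc (Fg_pos (by positivity))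
    have hA : |Erf (x / s)| ≤ Erf (1 / s) := by
      rw [hErf, hErf, abs_mul, abs_of_pos hc]
      refine mul_le_mul_of_nonneg_left (Fg_abs_le ?_) hc.le
      rw [abs_div, abs_of_pos hs]
      gcongr
    have hnum : |Erf (x / s) + 3 * Erf (1 / s)| ≤ 4 * Erf (1 / s) := by
      calc |Erf (x / s) + 3 * Erf (1 / s)| ≤ |Erf (x / s)| + |3 * Erf (1 / s)| :=
            abs_add_le _ _
        _ ≤ Erf (1 / s) + 3 * Erf (1 / s) := by
            rw [abs_mul, abs_of_pos hB]
            gcongr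
            norm_num
        _ = 4 * Erf (1 / s) := by ring
    rw [hu]
    rw [abs_div, abs_mul, abs_of_pos (Real.exp_pos _), abs_of_pos (by linarith : (0:ℝ) < 2 * Erf (1 / s))]
    rw [div_le_iff₀ (by linarith : (0:ℝ) < 2 * Erf (1 / s))]
    calc Real.exp ((x ^ 2 - 1) / (2 * ε)) * |Erf (x / s) + 3 * Erf (1 / s)|
        ≤ Real.exp ((x ^ 2 - 1) / (2 * ε)) * (4 * Erf (1 / s)) := by
          exact mul_le_mul_of_nonneg_left hnum (Real.exp_pos _).le
      _ = h ε * (2 * Erf (1 / s)) := by rw [hh]; ring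
  have hht : Filter.Tendsto h (nhdsWithin 0 (Set.Ioi 0)) (nhds 0) := by
    have h1 : Filter.Tendsto (fun ε : ℝ => (x ^ 2 - 1) / (2 * ε))
        (nhdsWithin 0 (Set.Ioi 0)) Filter.atBot := by
      have h2 : Filter.Tendsto (fun ε : ℝ => ε⁻¹) (nhdsWithin 0 (Set.Ioi 0))
          Filter.atTop := tendsto_inv_nhdsGT_zero
      have h3 : Filter.Tendsto (fun ε : ℝ => ((x ^ 2 - 1) / 2) * ε⁻¹)
          (nhdsWithin 0 (Set.Ioi 0)) Filter.atBot := by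
        apply Filter.Tendsto.const_mul_atTop_of_neg (by linarith) h2
      refine h3.congr fun ε => by ring
    have h4 : Filter.Tendsto (fun ε : ℝ => Real.exp ((x ^ 2 - 1) / (2 * ε)))
        (nhdsWithin 0 (Set.Ioi 0)) (nhds 0) := Real.tendsto_exp_atBot.comp h1
    have := h4.const_mul (2:ℝ)
    simpa using this
  exact squeeze_zero_norm'
    ((eventually_nhdsWithin_of_forall hbound).mono fun ε hb => by
      simpa [Real.norm_eq_abs] using hb) hht
end
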